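/- Let X be an integrable real-valued random variable on a probability space with nonatomic distribution, L ≤ X ≤ R almost surely, μ_a = E[X], and let μ_b satisfy μ_b < μ_a and P(X < μ_b) > 0. Then there exists a real number x₁ with μ_b < x₁ ≤ R such that E[X | X < x₁] = μ_b. -/

import Mathlib

/-!
The function `F x = ∫_{X < x} (X - μb) dP` is continuous because `X` has no atoms, negative at
`x = μb` because `P(X < μb) > 0`, and equal to `μa - μb > 0` at `x = R`. A zero `x₁ ∈ (μb, R]`
of `F` is the threshold: `∫_{X < x₁} X dP = μb · P(X < x₁)`.
-/

open MeasureTheory Filter Set Topology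

/-- Conditional expectation of `X` given the event `A`: `E[X·1_A] / P(A)`. -/
noncomputable def condExpSet {Ω : Type*} [MeasurableSpace Ω] (P : Measure Ω)
    (X : Ω → ℝ) (A : Set Ω) : ℝ :=
  (∫ ω in A, X ω ∂P) / (P A).toReal

lemma continuousAt_indicator_setOf_lt {Ω M : Type*} [Zero M] [TopologicalSpace M] {X : Ω → ℝ}
    (f : Ω → M) {ω : Ω} {x₀ : ℝ} (hω : X ω ≠ x₀) :
    ContinuousAt (fun x => {ω | X ω < x}.indicator f ω) x₀ := by
  rcases hω.lt_or_gt with h | h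
  · refine continuousAt_const.congr (f := fun _ => f ω) ?_
    filter_upwards [Ioi_mem_nhds h] with x hx
    exact (indicator_of_mem (s := {ω | X ω < x}) hx f).symm
  · refine continuousAt_const.congr (f := fun _ => 0) ?_
    filter_upwards [Iic_mem_nhds h] with x hx
    exact (indicator_of_notMem (s := {ω | X ω < x}) (fun h' : X ω < x => h'.not_ge hx) f).symm

section

variable {Ω E : Type*} [MeasurableSpace Ω] [NormedAddCommGroup E] [NormedSpace ℝ E]
  {P : Measure Ω} {X : Ω → ℝ}

lemma continuous_setIntegral_setOf_lt (hXm : Measurable X) (hna : ∀ r : ℝ, P (X ⁻¹' {r}) = 0)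
    {f : Ω → E} (hf : Integrable f P) :
    Continuous fun x => ∫ ω in {ω | X ω < x}, f ω ∂P := by
  have hms (x : ℝ) : MeasurableSet {ω | X ω < x} := hXm measurableSet_Iio
  simp only [← integral_indicator (hms _)]
  refine continuous_iff_continuousAt.2 fun x₀ => continuousAt_of_dominated
    (bound := fun ω => ‖f ω‖) (Eventually.of_forall fun x => hf.1.indicator (hms x))
    (Eventually.of_forall fun x => Eventually.of_forall fun ω => norm_indicator_le_norm_self f ω)
    hf.norm ?_
  have hne : ∀ᵐ ω ∂P, X ω ≠ x₀ := measure_eq_zero_iff_ae_notMem.1 (hna x₀)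
  filter_upwards [hne] with ω hω
  exact continuousAt_indicator_setOf_lt f hω

lemma setIntegral_setOf_lt_sub_neg [IsFiniteMeasure P] (hXm : Measurable X)
    (hXi : Integrable X P) {c : ℝ} (hc : 0 < P {ω | X ω < c}) :
    ∫ ω in {ω | X ω < c}, (X ω - c) ∂P < 0 := by
  have hint : Integrable (fun ω => c - X ω) P := (integrable_const c).sub hXi
  have hnonneg : 0 ≤ᵐ[P.restrict {ω | X ω < c}] fun ω => c - X ω :=
    ae_restrict_of_forall_mem (hXm measurableSet_Iio) fun ω hω => sub_nonneg.2 (le_of_lt hω)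
  have hpos : 0 < ∫ ω in {ω | X ω < c}, (c - X ω) ∂P :=
    (setIntegral_pos_iff_support_of_nonneg_ae hnonneg hint.integrableOn).2 <|
      hc.trans_le (measure_mono fun ω hω => ⟨sub_ne_zero.2 (ne_of_gt hω), hω⟩)
  rw [← neg_pos, ← integral_neg]
  simpa only [neg_sub] using hpos

lemma restrict_setOf_lt_eq_self (hna : ∀ r : ℝ, P (X ⁻¹' {r}) = 0) {R : ℝ}
    (hle : ∀ᵐ ω ∂P, X ω ≤ R) : P.restrict {ω | X ω < R} = P := by
  have hne : ∀ᵐ ω ∂P, X ω ≠ R := measure_eq_zero_iff_ae_notMem.1 (hna R)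
  refine Measure.restrict_eq_self_of_ae_mem ?_
  filter_upwards [hle, hne] with ω h₁ h₂
  exact lt_of_le_of_ne h₁ h₂

lemma condExpSet_eq_iff [IsFiniteMeasure P] {A : Set Ω} {c : ℝ} (hX : IntegrableOn X A P)
    (hA : P A ≠ 0) : condExpSet P X A = c ↔ ∫ ω in A, (X ω - c) ∂P = 0 := by
  have hA' : P.real A ≠ 0 := (measureReal_ne_zero_iff (measure_ne_top P A)).2 hA
  rw [condExpSet, ← measureReal_def, integral_sub hX (integrable_const c), setIntegral_const,
    smul_eq_mul, sub_eq_zero, div_eq_iff hA', mul_comm]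

end

theorem exists_threshold_general {Ω : Type*} [MeasurableSpace Ω] (P : Measure Ω)
    [IsProbabilityMeasure P] (X : Ω → ℝ) (hXm : Measurable X) (hXi : Integrable X P)
    (hna : ∀ r : ℝ, P (X ⁻¹' {r}) = 0)
    (L R : ℝ) (hbdd : ∀ᵐ ω ∂P, L ≤ X ω ∧ X ω ≤ R)
    (μa μb : ℝ) (hμa : μa = ∫ ω, X ω ∂P) (hμab : μb < μa)
    (hD0 : 0 < P {ω | X ω < μb}) :
    ∃ x₁ : ℝ, μb < x₁ ∧ x₁ ≤ R ∧ condExpSet P X {ω | X ω < x₁} = μb := by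
  set F : ℝ → ℝ := fun x => ∫ ω in {ω | X ω < x}, (X ω - μb) ∂P
  have hXR : ∀ᵐ ω ∂P, X ω ≤ R := hbdd.mono fun _ h => h.2
  have hμbR : μb < R := hμab.trans_le <| hμa ▸
    (integral_mono_ae hXi (integrable_const R) hXR).trans_eq (by simp)
  have hFR : F R = μa - μb := by
    simp [F, restrict_setOf_lt_eq_self hna hXR, integral_sub hXi (integrable_const μb), hμa]
  have hF : Continuous F := continuous_setIntegral_setOf_lt hXm hna (hXi.sub (integrable_const μb))
  obtain ⟨x₁, ⟨hμbx₁, hx₁R⟩, hFx₁⟩ : ∃ x₁ ∈ Ioc μb R, F x₁ = 0 :=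
    intermediate_value_Ioc hμbR.le hF.continuousOn
      ⟨setIntegral_setOf_lt_sub_neg hXm hXi hD0, by linarith⟩
  have hPx₁ : P {ω | X ω < x₁} ≠ 0 :=
    (hD0.trans_le (measure_mono fun ω hω => lt_trans hω hμbx₁)).ne'
  exact ⟨x₁, hμbx₁, hx₁R, (condExpSet_eq_iff hXi.integrableOn hPx₁).2 hFx₁⟩

/-- existence of a threshold `x₁` with `E[X | X < x₁] = μ_b`. -/
theorem exists_threshold {Ω : Type*} [MeasurableSpace Ω] (P : Measure Ω)
    [IsProbabilityMeasure P] (X : Ω → ℝ) (hXm : Measurable X) (hXi : Integrable X P)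
    (hna : ∀ r : ℝ, P (X ⁻¹' {r}) = 0)
    (L R : ℝ) (hLR : L < R) (hbdd : ∀ᵐ ω ∂P, L ≤ X ω ∧ X ω ≤ R)
    (μa μb : ℝ) (hμa : μa = ∫ ω, X ω ∂P) (hμab : μb < μa)
    (hD0 : 0 < P {ω | X ω < μb}) :
    ∃ x₁ : ℝ, μb < x₁ ∧ x₁ ≤ R ∧ condExpSet P X {ω | X ω < x₁} = μb :=
  exists_threshold_general P X hXm hXi hna L R hbdd μa μb hμa hμab hD0
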